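/- Let n ≥ 2, let R : Matrix (Fin n) (Fin n) ℝ be symmetric, f : Fin n → ℝ with f 0 ≠ 0 and f i = 0 for i ≠ 0, S : Fin n → ℝ, Sc F : ℝ with F = (f 0)^2 > 0, and S i = 0 for i ≠ 0. Suppose for all i j: S j * f i + (S i * f j)/(n-1) - (∑ m, f m * S m)/(n-1) * δ_{ij} - 2*F*(R i j) - (2*Sc/(n-1))*(f i * f j - F*δ_{ij}) = 0, where δ_{ij} = if i = j then 1 else 0. Then (a) R 0 i = 0 for all i ≠ 0, and (b) for all i ≠ 0, j ≠ 0, 2*F*(R i j) = ((2*Sc*F - S 0 * f 0)/(n-1)) * δ_{ij}. -/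

import Mathlib

/-!
Since `f` and `S` are supported at the index `0`, every product `S j * f i`, `S i * f j`,
`f i * f j` vanishes as soon as one of `i`, `j` is nonzero, and `∑ m, f m * S m = f 0 * S 0`.
The soliton equation at such a pair `(i, j)` then reduces to
`2 * F * R i j = (2 * Sc * F - S 0 * f 0) / (n - 1) * δᵢⱼ`, which gives both claims.
-/

section

variable {ι : Type*} [Fintype ι] [DecidableEq ι] {o : ι} {f S : ι → ℝ}

theorem two_mul_mul_entry_eq_of_ne_or_ne (hf : ∀ i, i ≠ o → f i = 0)
    (hS : ∀ i, i ≠ o → S i = 0) {R : Matrix ι ι ℝ} {Sc F d : ℝ} (hd : d ≠ 0) {i j : ι}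
    (hij : i ≠ o ∨ j ≠ o)
    (h : S j * f i + S i * f j / d - (∑ m, f m * S m) / d * (if i = j then (1:ℝ) else 0)
      - 2 * F * R i j - 2 * Sc / d * (f i * f j - F * (if i = j then (1:ℝ) else 0)) = 0) :
    2 * F * R i j = (2 * Sc * F - S o * f o) / d * (if i = j then (1:ℝ) else 0) := by
  have hsum : ∑ m, f m * S m = f o * S o :=
    Fintype.sum_eq_single o fun m hm => by rw [hf m hm, zero_mul]
  have hSf : S j * f i = 0 ∧ S i * f j = 0 ∧ f i * f j = 0 := by
    rcases hij with hi | hj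
    · simp [hf i hi, hS i hi]
    · simp [hf j hj, hS j hj]
  obtain ⟨hji, hij, hff⟩ := hSf
  rw [hsum, hji, hij, hff] at h
  field_simp at h ⊢
  linear_combination -h

end

theorem stmt_2_general (n : ℕ) (hn : 2 ≤ n) [NeZero n] (R : Matrix (Fin n) (Fin n) ℝ)
    (f S : Fin n → ℝ) (hf : ∀ i, i ≠ 0 → f i = 0)
    (Sc F : ℝ) (hFpos : 0 < F)
    (hS : ∀ i, i ≠ 0 → S i = 0)
    (h : ∀ i j, S j * f i + (S i * f j)/((n:ℝ)-1)
      - (∑ m, f m * S m)/((n:ℝ)-1) * (if i = j then (1:ℝ) else 0)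
      - 2*F*(R i j)
      - (2*Sc/((n:ℝ)-1))*(f i * f j - F * (if i = j then (1:ℝ) else 0)) = 0) :
    (∀ i, i ≠ 0 → R 0 i = 0) ∧
    (∀ i j, i ≠ 0 → j ≠ 0 →
      2*F*(R i j) = ((2*Sc*F - S 0 * f 0)/((n:ℝ)-1)) * (if i = j then (1:ℝ) else 0)) := by
  have hd : (n:ℝ) - 1 ≠ 0 := by
    have : (2:ℝ) ≤ n := by exact_mod_cast hn
    linarith
  refine ⟨fun i hi => ?_, fun i j hi _ =>
    two_mul_mul_entry_eq_of_ne_or_ne hf hS hd (.inl hi) (h i j)⟩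
  have hR := two_mul_mul_entry_eq_of_ne_or_ne hf hS hd (.inr hi) (h 0 i)
  rw [if_neg (Ne.symm hi), mul_zero] at hR
  simpa [hFpos.ne'] using hR

theorem stmt_2 (n : ℕ) (hn : 2 ≤ n) [NeZero n] (R : Matrix (Fin n) (Fin n) ℝ) (hR : R.IsSymm)
    (f S : Fin n → ℝ) (hf0 : f 0 ≠ 0) (hf : ∀ i, i ≠ 0 → f i = 0)
    (Sc F : ℝ) (hF : F = (f 0)^2) (hFpos : 0 < F)
    (hS : ∀ i, i ≠ 0 → S i = 0)
    (h : ∀ i j, S j * f i + (S i * f j)/((n:ℝ)-1)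
      - (∑ m, f m * S m)/((n:ℝ)-1) * (if i = j then (1:ℝ) else 0)
      - 2*F*(R i j)
      - (2*Sc/((n:ℝ)-1))*(f i * f j - F * (if i = j then (1:ℝ) else 0)) = 0) :
    (∀ i, i ≠ 0 → R 0 i = 0) ∧
    (∀ i j, i ≠ 0 → j ≠ 0 →
      2*F*(R i j) = ((2*Sc*F - S 0 * f 0)/((n:ℝ)-1)) * (if i = j then (1:ℝ) else 0)) :=
  stmt_2_general n hn R f S hf Sc F hFpos hS h
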